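/- Fix δ ∈ (0,1/2) and define r(x) = H(H⁻¹(x) + δ) for x ∈ (0, H(1/2 − δ)). With the substitution y = H⁻¹(x), the sign of r''(x) equals the sign of w(y) = f(y+δ) − f(y), where f(y) = y(1−y)log₂(1/y − 1); moreover w is strictly decreasing on (0, 1/2 − δ), positive near 0, and negative near 1/2 − δ. Consequently there is a unique z ∈ (0, H(1/2−δ)) such that r is convex on (0,z) and concave on (z, H(1/2−δ)). -/

import Mathlib

/-!
Write `y = g x`, `H' = binHDeriv` and `f = fEnt`. Since `g` inverts `H` on `[0, 1/2]`,
`g' = 1 / H'(g)`, so `r' = H'(y + δ) / H'(y)`. Differentiating again with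
`H''(p) = -1 / (p (1 - p) log 2)` and `f(p) = p (1 - p) H'(p)` gives
`r'' = w(y) / (log 2 · y (1 - y) · (y + δ)(1 - y - δ) · H'(y)³)`, a positive multiple of `w(y)`.
On `(0, 1/2)` one has `f'' < 0`, so `w' = f'(· + δ) - f' < 0`. Moreover `w 0 = f δ > 0` and
`w (1/2 - δ) = -f (1/2 - δ) < 0`, so `w` has exactly one zero `y₀`, and `r` is strictly convex
left of `H y₀` and strictly concave right of it; two different inflection points would make `r`
both strictly convex and concave on the interval between them.
-/

open Filter

/-- The binary entropy function (base-2 logarithms). -/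
noncomputable def binH (p : ℝ) : ℝ := -(p * Real.logb 2 p + (1 - p) * Real.logb 2 (1 - p))

/-- `f y = y (1-y) log₂(1/y − 1)`. -/
noncomputable def fEnt (y : ℝ) : ℝ := y * (1 - y) * Real.logb 2 (1 / y - 1)

/-- `w δ y = f(y+δ) − f(y)`. -/
noncomputable def wEnt (δ y : ℝ) : ℝ := fEnt (y + δ) - fEnt y

open Set Real Topology

lemma StrictConvexOn.not_concaveOn {𝕜 E β : Type*} [Field 𝕜] [LinearOrder 𝕜]
    [IsStrictOrderedRing 𝕜] [AddCommMonoid E] [AddCommMonoid β] [PartialOrder β] [Module 𝕜 E]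
    [SMul 𝕜 β] {s : Set E} {f : E → β} (hf : StrictConvexOn 𝕜 s f) (hs : s.Nontrivial) :
    ¬ConcaveOn 𝕜 s f := fun hf' => by
  obtain ⟨x, hx, y, hy, hxy⟩ := hs
  exact (hf'.2 hx hy one_half_pos.le one_half_pos.le (add_halves 1)).not_gt
    (hf.2 hx hy hxy one_half_pos one_half_pos (add_halves 1))

theorem existsUnique_convexOn_concaveOn_of_deriv2 {r : ℝ → ℝ} {a z b : ℝ} (haz : a < z)
    (hzb : z < b) (hr : ContinuousOn r (Ioo a b)) (hpos : ∀ x ∈ Ioo a z, 0 < deriv^[2] r x)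
    (hneg : ∀ x ∈ Ioo z b, deriv^[2] r x < 0) :
    ∃! z', z' ∈ Ioo a b ∧ ConvexOn ℝ (Ioo a z') r ∧ ConcaveOn ℝ (Ioo z' b) r := by
  have hconv : ∀ c, a ≤ c → StrictConvexOn ℝ (Ioo c z) r := fun c hc =>
    strictConvexOn_of_deriv2_pos (convex_Ioo c z) (hr.mono (Ioo_subset_Ioo hc hzb.le))
      fun x hx => hpos x (Ioo_subset_Ioo_left hc (by rwa [interior_Ioo] at hx))
  have hconc : ∀ d, d ≤ b → StrictConcaveOn ℝ (Ioo z d) r := fun d hd =>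
    strictConcaveOn_of_deriv2_neg (convex_Ioo z d) (hr.mono (Ioo_subset_Ioo haz.le hd))
      fun x hx => hneg x (Ioo_subset_Ioo_right hd (by rwa [interior_Ioo] at hx))
  refine ⟨z, ⟨⟨haz, hzb⟩, (hconv a le_rfl).convexOn, (hconc b le_rfl).concaveOn⟩, ?_⟩
  rintro z' ⟨hz', hconv', hconc'⟩
  by_contra hne
  rcases lt_or_gt_of_ne hne with h | h
  · exact (hconv z' hz'.1.le).not_concaveOn (Ioo_infinite h).nontrivial
      (hconc'.subset (Ioo_subset_Ioo_right hzb.le) (convex_Ioo _ _))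
  · exact (hconc z' hz'.2.le).neg.not_concaveOn (Ioo_infinite h).nontrivial
      (hconv'.subset (Ioo_subset_Ioo_left haz.le) (convex_Ioo _ _)).neg

lemma Real.sign_mul_of_pos {a c : ℝ} (hc : 0 < c) : Real.sign (a * c) = Real.sign a := by
  rcases lt_trichotomy a 0 with h | rfl | h
  · rw [sign_of_neg h, sign_of_neg (mul_neg_of_neg_of_pos h hc)]
  · simp
  · rw [sign_of_pos h, sign_of_pos (mul_pos h hc)]

lemma binH_eq_binEntropy_div (p : ℝ) : binH p = binEntropy p / log 2 := by
  simp only [binH, binEntropy, logb, log_inv]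
  ring

lemma binH_zero : binH 0 = 0 := by simp [binH_eq_binEntropy_div]

lemma binH_half : binH (1 / 2) = 1 := by
  rw [binH_eq_binEntropy_div, one_div, binEntropy_two_inv, div_self (log_pos one_lt_two).ne']

lemma binH_strictMonoOn : StrictMonoOn binH (Icc 0 (1 / 2)) := fun x hx y hy hxy => by
  rw [one_div] at hx hy
  simp only [binH_eq_binEntropy_div]
  exact div_lt_div_of_pos_right (binEntropy_strictMonoOn hx hy hxy) (log_pos one_lt_two)

lemma binH_mem_Icc {p : ℝ} (hp : p ∈ Icc (0 : ℝ) (1 / 2)) : binH p ∈ Icc 0 1 := by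
  rw [← binH_zero, ← binH_half]
  exact ⟨binH_strictMonoOn.monotoneOn (left_mem_Icc.2 (by norm_num)) hp hp.1,
    binH_strictMonoOn.monotoneOn hp (right_mem_Icc.2 (by norm_num)) hp.2⟩

lemma binH_mem_Ioo {p : ℝ} (hp : p ∈ Ioo (0 : ℝ) (1 / 2)) : binH p ∈ Ioo 0 1 := by
  rw [← binH_zero, ← binH_half]
  exact ⟨binH_strictMonoOn (left_mem_Icc.2 (by norm_num)) (Ioo_subset_Icc_self hp) hp.1,
    binH_strictMonoOn (Ioo_subset_Icc_self hp) (right_mem_Icc.2 (by norm_num)) hp.2⟩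

noncomputable def binHDeriv (p : ℝ) : ℝ := (log (1 - p) - log p) / log 2

lemma hasDerivAt_binH {p : ℝ} (h0 : p ≠ 0) (h1 : p ≠ 1) :
    HasDerivAt binH (binHDeriv p) p := by
  rw [funext binH_eq_binEntropy_div]
  exact (hasDerivAt_binEntropy h0 h1).div_const _

lemma hasDerivAt_binHDeriv {p : ℝ} (h0 : p ≠ 0) (h1 : p ≠ 1) :
    HasDerivAt binHDeriv (-(p * (1 - p) * log 2)⁻¹) p := by
  have h1' : 1 - p ≠ 0 := sub_ne_zero.2 h1.symm
  refine ((((hasDerivAt_id p).const_sub 1).log h1').sub (hasDerivAt_log h0)).div_const _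
    |>.congr_deriv ?_
  simp only [id]
  field_simp
  ring

lemma binHDeriv_pos {p : ℝ} (h0 : 0 < p) (h1 : p < 1 / 2) : 0 < binHDeriv p :=
  div_pos (sub_pos.2 (log_lt_log h0 (by linarith))) (log_pos one_lt_two)

lemma fEnt_eq_mul_binHDeriv (p : ℝ) : fEnt p = p * (1 - p) * binHDeriv p := by
  rcases eq_or_ne p 0 with rfl | h0
  · simp [fEnt]
  rcases eq_or_ne p 1 with rfl | h1
  · simp [fEnt]
  rw [fEnt, binHDeriv, logb, show 1 / p - 1 = (1 - p) / p by field_simp,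
    log_div (sub_ne_zero.2 h1.symm) h0]

lemma fEnt_eq_negMulLog (p : ℝ) :
    fEnt p = ((1 - p) * negMulLog p - p * negMulLog (1 - p)) / log 2 := by
  rw [fEnt_eq_mul_binHDeriv, binHDeriv, negMulLog, negMulLog]
  ring

lemma continuous_fEnt : Continuous fEnt := by
  rw [funext fEnt_eq_negMulLog]
  fun_prop

lemma fEnt_pos {p : ℝ} (h0 : 0 < p) (h1 : p < 1 / 2) : 0 < fEnt p := by
  have := binHDeriv_pos h0 h1
  have : 0 < 1 - p := by linarith
  rw [fEnt_eq_mul_binHDeriv]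
  positivity

noncomputable def fEntDeriv (p : ℝ) : ℝ := (1 - 2 * p) * binHDeriv p - (log 2)⁻¹

lemma hasDerivAt_fEnt {p : ℝ} (h0 : p ≠ 0) (h1 : p ≠ 1) :
    HasDerivAt fEnt (fEntDeriv p) p := by
  have h1' : 1 - p ≠ 0 := sub_ne_zero.2 h1.symm
  rw [funext fEnt_eq_mul_binHDeriv]
  refine ((hasDerivAt_id' p).fun_mul ((hasDerivAt_id' p).const_sub 1)).fun_mul
    (hasDerivAt_binHDeriv h0 h1)
    |>.congr_deriv ?_
  simp only [fEntDeriv]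
  field_simp
  ring

lemma hasDerivAt_fEntDeriv {p : ℝ} (h0 : p ≠ 0) (h1 : p ≠ 1) :
    HasDerivAt fEntDeriv (-2 * binHDeriv p - (1 - 2 * p) * (p * (1 - p) * log 2)⁻¹) p := by
  refine (((hasDerivAt_id p).const_mul 2).const_sub 1).mul (hasDerivAt_binHDeriv h0 h1)
    |>.sub_const _ |>.congr_deriv ?_
  simp only [id]
  ring

lemma fEntDeriv_strictAntiOn : StrictAntiOn fEntDeriv (Ioo 0 (1 / 2)) := by
  refine strictAntiOn_of_deriv_neg (convex_Ioo _ _)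
    (fun p hp =>
      (hasDerivAt_fEntDeriv hp.1.ne' (by linarith [hp.2])).continuousAt.continuousWithinAt)
    fun p hp => ?_
  rw [interior_Ioo] at hp
  obtain ⟨h0, h1⟩ := hp
  rw [(hasDerivAt_fEntDeriv h0.ne' (by linarith)).deriv]
  have := binHDeriv_pos h0 h1
  have : 0 < (1 - 2 * p) * (p * (1 - p) * log 2)⁻¹ :=
    mul_pos (by linarith) (inv_pos.2 (mul_pos (mul_pos h0 (by linarith)) (log_pos one_lt_two)))
  linarith

lemma continuous_wEnt (δ : ℝ) : Continuous (wEnt δ) :=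
  (continuous_fEnt.comp (continuous_add_const δ)).sub continuous_fEnt

lemma wEnt_strictAntiOn {δ : ℝ} (hδ : 0 < δ) :
    StrictAntiOn (wEnt δ) (Ioo 0 (1 / 2 - δ)) := by
  refine strictAntiOn_of_deriv_neg (convex_Ioo _ _) (continuous_wEnt δ).continuousOn
    fun y hy => ?_
  rw [interior_Ioo] at hy
  obtain ⟨h0, h1⟩ := hy
  have hd := ((hasDerivAt_fEnt (p := y + δ) (by linarith) (by linarith)).comp_add_const y δ)
    |>.fun_sub (hasDerivAt_fEnt h0.ne' (by linarith))
  rw [show wEnt δ = fun y => fEnt (y + δ) - fEnt y from rfl, hd.deriv, sub_neg]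
  exact fEntDeriv_strictAntiOn ⟨h0, by linarith⟩ ⟨by linarith, by linarith⟩ (by linarith)

lemma wEnt_zero_pos {δ : ℝ} (h0 : 0 < δ) (h1 : δ < 1 / 2) : 0 < wEnt δ 0 := by
  simpa [wEnt, fEnt] using fEnt_pos h0 h1

lemma wEnt_half_sub_neg {δ : ℝ} (h0 : 0 < δ) (h1 : δ < 1 / 2) : wEnt δ (1 / 2 - δ) < 0 := by
  have := fEnt_pos (p := 1 / 2 - δ) (by linarith) (by linarith)
  rw [wEnt, sub_add_cancel, fEnt_eq_mul_binHDeriv (1 / 2), binHDeriv]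
  norm_num
  linarith

lemma eventually_nhdsGT_wEnt_pos {δ : ℝ} (h0 : 0 < δ) (h1 : δ < 1 / 2) :
    ∀ᶠ y in 𝓝[>] 0, 0 < wEnt δ y :=
  (((continuous_wEnt δ).tendsto 0).eventually (lt_mem_nhds (wEnt_zero_pos h0 h1))).filter_mono
    nhdsWithin_le_nhds

lemma eventually_nhdsLT_wEnt_neg {δ : ℝ} (h0 : 0 < δ) (h1 : δ < 1 / 2) :
    ∀ᶠ y in 𝓝[<] (1 / 2 - δ), wEnt δ y < 0 :=
  (((continuous_wEnt δ).tendsto _).eventually (gt_mem_nhds (wEnt_half_sub_neg h0 h1))).filter_mono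
    nhdsWithin_le_nhds

lemma exists_wEnt_eq_zero {δ : ℝ} (h0 : 0 < δ) (h1 : δ < 1 / 2) :
    ∃ y ∈ Ioo 0 (1 / 2 - δ), wEnt δ y = 0 :=
  intermediate_value_Ioo' (by linarith) (continuous_wEnt δ).continuousOn
    ⟨wEnt_half_sub_neg h0 h1, wEnt_zero_pos h0 h1⟩

structure IsBinHInverse (g : ℝ → ℝ) : Prop where
  left_inv : ∀ p ∈ Icc (0 : ℝ) (1 / 2), g (binH p) = p
  right_inv : ∀ x ∈ Icc (0 : ℝ) 1, binH (g x) = x ∧ g x ∈ Icc (0 : ℝ) (1 / 2)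

namespace IsBinHInverse

variable {g : ℝ → ℝ} (hg : IsBinHInverse g)
include hg

lemma strictMonoOn : StrictMonoOn g (Icc 0 1) := fun x hx y hy hxy => by
  by_contra! h
  have := binH_strictMonoOn.monotoneOn (hg.right_inv y hy).2 (hg.right_inv x hx).2 h
  rw [(hg.right_inv x hx).1, (hg.right_inv y hy).1] at this
  linarith

lemma mem_Ioo {a b x : ℝ} (ha : a ∈ Icc (0 : ℝ) (1 / 2)) (hb : b ∈ Icc (0 : ℝ) (1 / 2))
    (hx : x ∈ Ioo (binH a) (binH b)) : g x ∈ Ioo a b := by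
  have hx' : x ∈ Icc 0 1 := Icc_subset_Icc (binH_mem_Icc ha).1 (binH_mem_Icc hb).2
    (Ioo_subset_Icc_self hx)
  exact ⟨(hg.left_inv a ha).symm.trans_lt (hg.strictMonoOn (binH_mem_Icc ha) hx' hx.1),
    (hg.strictMonoOn hx' (binH_mem_Icc hb) hx.2).trans_eq (hg.left_inv b hb)⟩

lemma mem_Ioo_zero_half {x : ℝ} (hx : x ∈ Ioo (0 : ℝ) 1) : g x ∈ Ioo (0 : ℝ) (1 / 2) :=
  hg.mem_Ioo (left_mem_Icc.2 (by norm_num)) (right_mem_Icc.2 (by norm_num))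
    (by rwa [binH_zero, binH_half])

lemma continuousAt {x : ℝ} (hx : x ∈ Ioo (0 : ℝ) 1) : ContinuousAt g x := by
  obtain ⟨h0, h1⟩ := hg.mem_Ioo_zero_half hx
  refine (hg.strictMonoOn.mono Ioo_subset_Icc_self).continuousAt_of_image_mem_nhds
    (Ioo_mem_nhds hx.1 hx.2) (mem_of_superset (Ioo_mem_nhds h0 h1) fun p hp => ?_)
  exact ⟨binH p, binH_mem_Ioo hp, hg.left_inv p (Ioo_subset_Icc_self hp)⟩

lemma hasDerivAt {x : ℝ} (hx : x ∈ Ioo (0 : ℝ) 1) :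
    HasDerivAt g (binHDeriv (g x))⁻¹ x := by
  obtain ⟨h0, h1⟩ := hg.mem_Ioo_zero_half hx
  refine .of_local_left_inverse (hg.continuousAt hx) (hasDerivAt_binH h0.ne' (by linarith))
    (binHDeriv_pos h0 h1).ne' ?_
  filter_upwards [Ioo_mem_nhds hx.1 hx.2] with y hy using
    (hg.right_inv y (Ioo_subset_Icc_self hy)).1

lemma hasDerivAt_binH_comp_add {δ x : ℝ} (hδ : δ ∈ Icc (0 : ℝ) (1 / 2))
    (hx : x ∈ Ioo (0 : ℝ) 1) :
    HasDerivAt (fun x => binH (g x + δ)) (binHDeriv (g x + δ) / binHDeriv (g x)) x := by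
  obtain ⟨h0, h1⟩ := hg.mem_Ioo_zero_half hx
  exact (hasDerivAt_binH (by linarith [hδ.1]) (by linarith [hδ.2])).comp x
    ((hg.hasDerivAt hx).add_const δ)

lemma deriv2_binH_comp_add {δ x : ℝ} (hδ : δ ∈ Icc (0 : ℝ) (1 / 2))
    (hx : x ∈ Ioo (0 : ℝ) 1) :
    deriv^[2] (fun x => binH (g x + δ)) x = wEnt δ (g x) /
      (log 2 * (g x * (1 - g x)) * ((g x + δ) * (1 - (g x + δ))) * binHDeriv (g x) ^ 3) := by
  obtain ⟨h0, h1⟩ := hg.mem_Ioo_zero_half hx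
  have hδ0 : g x + δ ≠ 0 := by linarith [hδ.1]
  have hδ1 : g x + δ ≠ 1 := by linarith [hδ.2]
  have hd : deriv (fun x => binH (g x + δ)) =ᶠ[𝓝 x]
      fun x => binHDeriv (g x + δ) / binHDeriv (g x) := by
    filter_upwards [Ioo_mem_nhds hx.1 hx.2] with y hy using
      (hg.hasDerivAt_binH_comp_add hδ hy).deriv
  have hA : HasDerivAt (fun y => binHDeriv (g y + δ))
      (-((g x + δ) * (1 - (g x + δ)) * log 2)⁻¹ * (binHDeriv (g x))⁻¹) x :=
    (hasDerivAt_binHDeriv hδ0 hδ1).comp (h₂ := binHDeriv) x ((hg.hasDerivAt hx).add_const δ)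
  have hB : HasDerivAt (fun y => binHDeriv (g y))
      (-(g x * (1 - g x) * log 2)⁻¹ * (binHDeriv (g x))⁻¹) x :=
    (hasDerivAt_binHDeriv h0.ne' (by linarith)).comp x (hg.hasDerivAt hx)
  have hpos := binHDeriv_pos h0 h1
  rw [Function.iterate_succ_apply', Function.iterate_one, hd.deriv_eq,
    (hA.fun_div hB hpos.ne').deriv, wEnt, fEnt_eq_mul_binHDeriv, fEnt_eq_mul_binHDeriv]
  have : 1 - g x ≠ 0 := by linarith
  have : 1 - (g x + δ) ≠ 0 := sub_ne_zero.2 hδ1.symm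
  field_simp
  ring

lemma exists_pos_deriv2_eq_wEnt_mul {δ x : ℝ} (hδ : δ ∈ Icc (0 : ℝ) (1 / 2))
    (hx : x ∈ Ioo (0 : ℝ) 1) :
    ∃ c > 0, deriv^[2] (fun x => binH (g x + δ)) x = wEnt δ (g x) * c := by
  obtain ⟨h0, h1⟩ := hg.mem_Ioo_zero_half hx
  have := binHDeriv_pos h0 h1
  have : 0 < 1 - g x := by linarith
  have : 0 < g x + δ := by linarith [hδ.1]
  have : 0 < 1 - (g x + δ) := by linarith [hδ.2]
  have := log_pos one_lt_two
  exact ⟨_, by positivity, (hg.deriv2_binH_comp_add hδ hx).trans (div_eq_mul_inv _ _)⟩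

end IsBinHInverse

theorem stmt19 (g : ℝ → ℝ)
    (hg_left : ∀ p ∈ Set.Icc (0:ℝ) (1/2), g (binH p) = p)
    (hg_right : ∀ x ∈ Set.Icc (0:ℝ) 1, binH (g x) = x ∧ g x ∈ Set.Icc (0:ℝ) (1/2))
    (δ : ℝ) (hδ : δ ∈ Set.Ioo (0:ℝ) (1/2)) :
    (∀ x ∈ Set.Ioo (0:ℝ) (binH (1/2 - δ)),
      Real.sign (iteratedDeriv 2 (fun x => binH (g x + δ)) x) = Real.sign (wEnt δ (g x))) ∧
    StrictAntiOn (wEnt δ) (Set.Ioo (0:ℝ) (1/2 - δ)) ∧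
    (∀ᶠ y in nhdsWithin (0:ℝ) (Set.Ioi 0), 0 < wEnt δ y) ∧
    (∀ᶠ y in nhdsWithin (1/2 - δ) (Set.Iio (1/2 - δ)), wEnt δ y < 0) ∧
    (∃! z : ℝ, z ∈ Set.Ioo (0:ℝ) (binH (1/2 - δ)) ∧
      ConvexOn ℝ (Set.Ioo 0 z) (fun x => binH (g x + δ)) ∧
      ConcaveOn ℝ (Set.Ioo z (binH (1/2 - δ))) (fun x => binH (g x + δ))) := by
  have hg : IsBinHInverse g := ⟨hg_left, hg_right⟩
  have hδ' : δ ∈ Icc (0 : ℝ) (1 / 2) := Ioo_subset_Icc_self hδ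
  obtain ⟨hδ0, hδ1⟩ := hδ
  have hzero : (0 : ℝ) ∈ Icc (0 : ℝ) (1 / 2) := left_mem_Icc.2 (by norm_num)
  have hend : 1 / 2 - δ ∈ Icc (0 : ℝ) (1 / 2) := ⟨by linarith, by linarith⟩
  have hsub : Ioo 0 (binH (1 / 2 - δ)) ⊆ Ioo 0 1 := Ioo_subset_Ioo_right (binH_mem_Icc hend).2
  obtain ⟨y₀, hy₀, hwy₀⟩ := exists_wEnt_eq_zero hδ0 hδ1
  have hy₀' : y₀ ∈ Icc (0 : ℝ) (1 / 2) := ⟨hy₀.1.le, by linarith [hy₀.2]⟩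
  refine ⟨fun x hx => ?_, wEnt_strictAntiOn hδ0,
    eventually_nhdsGT_wEnt_pos hδ0 hδ1, eventually_nhdsLT_wEnt_neg hδ0 hδ1, ?_⟩
  · obtain ⟨c, hc, h⟩ := hg.exists_pos_deriv2_eq_wEnt_mul hδ' (hsub hx)
    rw [iteratedDeriv_eq_iterate, h, Real.sign_mul_of_pos hc]
  have hz : binH y₀ ∈ Ioo 0 (binH (1 / 2 - δ)) :=
    ⟨binH_zero ▸ binH_strictMonoOn hzero hy₀' hy₀.1, binH_strictMonoOn hy₀' hend hy₀.2⟩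
  refine existsUnique_convexOn_concaveOn_of_deriv2 hz.1 hz.2
    (fun x hx => (hg.hasDerivAt_binH_comp_add hδ' (hsub hx)).continuousAt.continuousWithinAt)
    (fun x hx => ?_) (fun x hx => ?_)
  · have hgx := hg.mem_Ioo hzero hy₀' (by rwa [binH_zero])
    obtain ⟨c, hc, h⟩ := hg.exists_pos_deriv2_eq_wEnt_mul hδ' (hsub ⟨hx.1, hx.2.trans hz.2⟩)
    rw [h]
    exact mul_pos (hwy₀ ▸ wEnt_strictAntiOn hδ0 ⟨hgx.1, hgx.2.trans hy₀.2⟩ hy₀ hgx.2) hc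
  · have hgx := hg.mem_Ioo hy₀' hend hx
    obtain ⟨c, hc, h⟩ := hg.exists_pos_deriv2_eq_wEnt_mul hδ' (hsub ⟨hz.1.trans hx.1, hx.2⟩)
    rw [h]
    exact mul_neg_of_neg_of_pos
      (hwy₀ ▸ wEnt_strictAntiOn hδ0 hy₀ ⟨hy₀.1.trans hgx.1, hgx.2⟩ hgx.1) hc
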